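/- Let P be BT-consistent with respect to r* with strictly positive negative conditional and P_X strictly positive, let B > 0, and let r, r* : 𝒳 × 𝒴 → ℝ satisfy |r(x,y)| ≤ B and |r*(x,y)| ≤ B for all x, y. With c_B = σ(2B)(1 − σ(2B)), one has c_B · E_{P̃}[ (Δ_r(x,y,y') − Δ_{r*}(x,y,y'))² ] ≤ (2/Z)·( L_BT(r) − L_BT(r*) ). -/

import Mathlib

open scoped BigOperators

/-- The sigmoid function σ(t) = 1/(1+e^{-t}). -/
noncomputable def sigmoid (t : ℝ) : ℝ := 1 / (1 + Real.exp (-t))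

/-- The population Bradley–Terry objective. -/
noncomputable def LBT {X Y : Type*} [Fintype X] [Fintype Y]
    (P : X → Y → Y → ℝ) (r : X → Y → ℝ) : ℝ :=
  -∑ x, ∑ y, ∑ y', P x y y' * Real.log (sigmoid (r x y - r x y'))

/-- Normalizing constant Z of the comparison distribution P̃. -/
noncomputable def Zconst {X Y : Type*} [Fintype X] [Fintype Y] [DecidableEq Y]
    (P : X → Y → Y → ℝ) : ℝ :=
  (∑ x, ∑ y, ∑ y', if y ≠ y' then P x y y' + P x y' y else 0) / 2

/-- Expectation under the comparison distribution P̃ of a symmetric function of (x,{y,y'}). -/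
noncomputable def ePt {X Y : Type*} [Fintype X] [Fintype Y] [DecidableEq Y]
    (P : X → Y → Y → ℝ) (f : X → Y → Y → ℝ) : ℝ :=
  (∑ x, ∑ y, ∑ y', if y ≠ y' then (P x y y' + P x y' y) * f x y y' else 0) /
    (2 * Zconst P)

/-!
With `softplus t = log (1 + exp t)` one has `log σ t = -softplus (-t)`, `softplus' = σ` and
`softplus'' = σ (1 - σ) ≥ c_B` on `[-2B, 2B]`, so the Bregman divergence of `softplus` there is at
least `c_B / 2 · (a - b)²`. BT-consistency gives `P(x,y',y) = exp(-b) P(x,y,y')` for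
`b = Δ_{r*}(x,y,y')`, i.e. `P(x,y,y') = σ(b) (P(x,y,y') + P(x,y',y))`; hence the two orientations of
a pair contribute to the excess risk exactly `P(x,y,y') + P(x,y',y)` times the Bregman divergence
between `a = Δ_r(x,y,y')` and `b`.
-/

open Finset

lemma sigmoid_eq_real_sigmoid : sigmoid = Real.sigmoid := by
  funext t
  rw [sigmoid, Real.sigmoid_def, one_div]

lemma ConvexOn.add_mul_sub_le_of_hasDerivAt {S : Set ℝ} {f : ℝ → ℝ} {f' x y : ℝ}
    (hf : ConvexOn ℝ S f) (hx : x ∈ S) (hy : y ∈ S) (hd : HasDerivAt f f' x) :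
    f x + f' * (y - x) ≤ f y := by
  rcases lt_trichotomy x y with hxy | rfl | hyx
  · have := hf.le_slope_of_hasDerivAt hx hy hxy hd
    rw [slope_def_field, le_div_iff₀ (sub_pos.2 hxy)] at this
    linarith
  · simp
  · have := hf.slope_le_of_hasDerivAt hy hx hyx hd
    rw [slope_def_field, div_le_iff₀ (sub_pos.2 hyx)] at this
    linarith

namespace Real

lemma sigmoid_mul_one_sub_le_of_abs_le {s t : ℝ} (h : |t| ≤ s) :
    sigmoid s * (1 - sigmoid s) ≤ sigmoid t * (1 - sigmoid t) := by
  obtain ⟨hst, hts⟩ := abs_le.1 h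
  have hlo : 1 - sigmoid s ≤ sigmoid t := by rw [← sigmoid_neg]; exact sigmoid_le hst
  have hhi : sigmoid t ≤ sigmoid s := sigmoid_le hts
  -- `σ (1 - σ) = 1/4 - (σ - 1/2)²` and `|σ t - 1/2| ≤ σ s - 1/2`
  nlinarith

noncomputable def softplus (t : ℝ) : ℝ := log (1 + exp t)

lemma log_sigmoid (t : ℝ) : log (sigmoid t) = -softplus (-t) := by
  rw [sigmoid_def, log_inv, softplus]

lemma softplus_neg (t : ℝ) : softplus (-t) = softplus t - t := by
  have h : 1 + exp (-t) = (1 + exp t) * exp (-t) := by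
    rw [add_mul, one_mul, ← exp_add, add_neg_cancel, exp_zero, add_comm]
  rw [softplus, h, log_mul (by positivity) (by positivity), log_exp, softplus]
  ring

lemma hasDerivAt_softplus (t : ℝ) : HasDerivAt softplus (sigmoid t) t := by
  have h : sigmoid t = exp t / (1 + exp t) := by
    rw [sigmoid_def, exp_neg]
    field_simp
    ring
  rw [h]
  exact ((hasDerivAt_exp t).const_add 1).log (by positivity)

lemma bregman_softplus_ge {s a b : ℝ} (ha : |a| ≤ s) (hb : |b| ≤ s) :
    sigmoid s * (1 - sigmoid s) / 2 * (a - b) ^ 2 ≤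
      softplus a - softplus b - sigmoid b * (a - b) := by
  set c := sigmoid s * (1 - sigmoid s)
  have hg' : ∀ t, HasDerivAt (fun u => softplus u - c / 2 * u ^ 2) (sigmoid t - c * t) t := by
    intro t
    refine ((hasDerivAt_softplus t).fun_sub
      ((hasDerivAt_pow 2 t).const_mul (c / 2))).congr_deriv ?_
    push_cast
    ring
  have hg'' : ∀ t, HasDerivAt (fun u => sigmoid u - c * u) (sigmoid t * (1 - sigmoid t) - c) t :=
    fun t => ((hasDerivAt_sigmoid t).fun_sub
      ((hasDerivAt_id' t).const_mul c)).congr_deriv (by ring)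
  have hconv : ConvexOn ℝ (Set.Icc (-s) s) (fun u => softplus u - c / 2 * u ^ 2) := by
    refine convexOn_of_hasDerivWithinAt2_nonneg (convex_Icc _ _)
      (fun t _ => (hg' t).continuousAt.continuousWithinAt) (fun t _ => (hg' t).hasDerivWithinAt)
      (fun t _ => (hg'' t).hasDerivWithinAt) fun t ht => ?_
    rw [interior_Icc] at ht
    exact sub_nonneg.2 (sigmoid_mul_one_sub_le_of_abs_le (abs_le.2 ⟨ht.1.le, ht.2.le⟩))
  have := hconv.add_mul_sub_le_of_hasDerivAt (abs_le.1 hb) (abs_le.1 ha) (hg' b)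
  linear_combination this

lemma pair_excess_ge {s a b p q : ℝ} (ha : |a| ≤ s) (hb : |b| ≤ s) (hp : 0 ≤ p)
    (hq : q = exp (-b) * p) :
    sigmoid s * (1 - sigmoid s) * ((p + q) * (a - b) ^ 2) ≤
      2 * (p * (log (sigmoid b) - log (sigmoid a)) +
        q * (log (sigmoid (-b)) - log (sigmoid (-a)))) := by
  have hpq : 0 ≤ p + q := by rw [hq]; positivity
  have hσ : sigmoid b * (p + q) = p := by
    rw [hq, sigmoid_def]
    field_simp
  have hbreg := mul_le_mul_of_nonneg_left (bregman_softplus_ge ha hb) hpq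
  rw [log_sigmoid, log_sigmoid, log_sigmoid, log_sigmoid, neg_neg, neg_neg, softplus_neg,
    softplus_neg]
  linear_combination 2 * hbreg - 2 * (a - b) * hσ

end Real

section BradleyTerry

lemma swap_eq_exp_neg_mul_of_bt {X Y : Type*} (P : X → Y → Y → ℝ) (PX : X → ℝ)
    (pplus pminus : X → Y → ℝ) (rstar : X → Y → ℝ)
    (hlink : ∀ x y, pplus x y = Real.exp (rstar x y) * pminus x y)
    (hfact : ∀ x yp ym, P x yp ym = PX x * pplus x yp * pminus x ym) (x : X) (y y' : Y) :
    P x y' y = Real.exp (-(rstar x y - rstar x y')) * P x y y' := by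
  rw [hfact, hfact, hlink, hlink, neg_sub, Real.exp_sub]
  field_simp

variable {X Y : Type*} [Fintype X] [Fintype Y]

noncomputable def btExcess (P : X → Y → Y → ℝ) (r rstar : X → Y → ℝ) (x : X) (y y' : Y) : ℝ :=
  P x y y' * (Real.log (Real.sigmoid (rstar x y - rstar x y')) -
    Real.log (Real.sigmoid (r x y - r x y')))

lemma two_mul_LBT_sub_LBT (P : X → Y → Y → ℝ) (r rstar : X → Y → ℝ) :
    2 * (LBT P r - LBT P rstar) =
      ∑ x, ∑ y, ∑ y', (btExcess P r rstar x y y' + btExcess P r rstar x y' y) := by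
  have hsub : LBT P r - LBT P rstar = ∑ x, ∑ y, ∑ y', btExcess P r rstar x y y' := by
    simp only [LBT, btExcess, sigmoid_eq_real_sigmoid, neg_sub_neg, ← sum_sub_distrib,
      mul_sub]
  have hswap : ∑ x, ∑ y, ∑ y', btExcess P r rstar x y' y =
      ∑ x, ∑ y, ∑ y', btExcess P r rstar x y y' :=
    sum_congr rfl fun x _ => sum_comm
  simp only [sum_add_distrib, hswap, hsub]
  ring

variable [DecidableEq Y]

lemma Zconst_nonneg {P : X → Y → Y → ℝ} (hP : ∀ x y y', 0 ≤ P x y y') : 0 ≤ Zconst P := by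
  refine div_nonneg (sum_nonneg fun x _ => sum_nonneg fun y _ => sum_nonneg fun y' _ => ?_)
    zero_le_two
  split_ifs
  exacts [add_nonneg (hP x y y') (hP x y' y), le_rfl]

lemma ePt_le_sum_div {P : X → Y → Y → ℝ} {f : X → Y → Y → ℝ}
    (hP : ∀ x y y', 0 ≤ P x y y') (hf : ∀ x y y', 0 ≤ f x y y') :
    ePt P f ≤ (∑ x, ∑ y, ∑ y', (P x y y' + P x y' y) * f x y y') / (2 * Zconst P) := by
  refine div_le_div_of_nonneg_right (sum_le_sum fun x _ => sum_le_sum fun y _ =>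
    sum_le_sum fun y' _ => ?_) (by linarith [Zconst_nonneg hP])
  split_ifs
  exacts [le_rfl, mul_nonneg (add_nonneg (hP x y y') (hP x y' y)) (hf x y y')]

end BradleyTerry

theorem stmt_14_general {X Y : Type*} [Fintype X] [Fintype Y] [DecidableEq Y]
    (P : X → Y → Y → ℝ) (PX : X → ℝ) (pplus pminus : X → Y → ℝ)
    (rstar : X → Y → ℝ)
    (hPX0 : ∀ x, 0 < PX x)
    (hm0 : ∀ x y, 0 < pminus x y)
    (hlink : ∀ x y, pplus x y = Real.exp (rstar x y) * pminus x y)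
    (hfact : ∀ x yp ym, P x yp ym = PX x * pplus x yp * pminus x ym)
    (B : ℝ) (r : X → Y → ℝ)
    (hr : ∀ x y, |r x y| ≤ B) (hrstar : ∀ x y, |rstar x y| ≤ B) :
    sigmoid (2 * B) * (1 - sigmoid (2 * B)) *
        ePt P (fun x y y' => ((r x y - r x y') - (rstar x y - rstar x y')) ^ 2) ≤
      (2 / Zconst P) * (LBT P r - LBT P rstar) := by
  have hP : ∀ x y y', 0 ≤ P x y y' := fun x y y' => by
    have := hPX0 x; have := hm0 x y; have := hm0 x y'
    rw [hfact, hlink]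
    positivity
  have hmargin : ∀ f : X → Y → ℝ, (∀ x y, |f x y| ≤ B) → ∀ x y y', |f x y - f x y'| ≤ 2 * B :=
    fun f hf x y y' => (abs_sub _ _).trans (by linarith [hf x y, hf x y'])
  rw [sigmoid_eq_real_sigmoid]
  set c := Real.sigmoid (2 * B) * (1 - Real.sigmoid (2 * B))
  have hc : 0 ≤ c := mul_nonneg (Real.sigmoid_nonneg _) (sub_nonneg.2 (Real.sigmoid_le_one _))
  have hsum : c * ∑ x, ∑ y, ∑ y', (P x y y' + P x y' y) *
      ((r x y - r x y') - (rstar x y - rstar x y')) ^ 2 ≤ 2 * (2 * (LBT P r - LBT P rstar)) := by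
    rw [two_mul_LBT_sub_LBT]
    simp only [mul_sum]
    refine sum_le_sum fun x _ => sum_le_sum fun y _ => sum_le_sum fun y' _ => ?_
    have := Real.pair_excess_ge (hmargin r hr x y y') (hmargin rstar hrstar x y y') (hP x y y')
      (swap_eq_exp_neg_mul_of_bt P PX pplus pminus rstar hlink hfact x y y')
    rwa [neg_sub, neg_sub] at this
  calc c * ePt P (fun x y y' => ((r x y - r x y') - (rstar x y - rstar x y')) ^ 2)
      ≤ c * ((∑ x, ∑ y, ∑ y', (P x y y' + P x y' y) *
          ((r x y - r x y') - (rstar x y - rstar x y')) ^ 2) / (2 * Zconst P)) :=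
        mul_le_mul_of_nonneg_left (ePt_le_sum_div hP fun _ _ _ => sq_nonneg _) hc
    _ ≤ 2 * (2 * (LBT P r - LBT P rstar)) / (2 * Zconst P) := by
        rw [← mul_div_assoc]
        exact div_le_div_of_nonneg_right hsum (by linarith [Zconst_nonneg hP])
    _ = 2 / Zconst P * (LBT P r - LBT P rstar) := by ring

/-- Strong-convexity bound on the excess BT risk for a BT-consistent distribution:
c_B · E_{P̃}[(Δ_r − Δ_{r*})²] ≤ (2/Z)·(L_BT(r) − L_BT(r*)), where c_B = σ(2B)(1−σ(2B)). -/
theorem stmt_14 {X Y : Type*} [Fintype X] [Fintype Y] [DecidableEq Y]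
    [Nonempty X] [Nonempty Y]
    (P : X → Y → Y → ℝ) (PX : X → ℝ) (pplus pminus : X → Y → ℝ)
    (rstar : X → Y → ℝ)
    (hPX0 : ∀ x, 0 < PX x) (hPX1 : ∑ x, PX x = 1)
    (hm0 : ∀ x y, 0 < pminus x y)
    (hp1 : ∀ x, ∑ y, pplus x y = 1) (hm1 : ∀ x, ∑ y, pminus x y = 1)
    (hlink : ∀ x y, pplus x y = Real.exp (rstar x y) * pminus x y)
    (hfact : ∀ x yp ym, P x yp ym = PX x * pplus x yp * pminus x ym)
    (hZ : 0 < Zconst P)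
    (B : ℝ) (hB : 0 < B) (r : X → Y → ℝ)
    (hr : ∀ x y, |r x y| ≤ B) (hrstar : ∀ x y, |rstar x y| ≤ B) :
    sigmoid (2 * B) * (1 - sigmoid (2 * B)) *
        ePt P (fun x y y' => ((r x y - r x y') - (rstar x y - rstar x y')) ^ 2) ≤
      (2 / Zconst P) * (LBT P r - LBT P rstar) :=
  stmt_14_general P PX pplus pminus rstar hPX0 hm0 hlink hfact B r hr hrstar
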